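/- Let ψ : [0,1) → [0,∞) be integrable with lim_{x↑1} ψ(x) = ψ₁ ∈ (0,∞), let λ > 0, and let h̃(λ, N) = (1/4 + √(1/16 + N/(2λ)))^{−1}. Define J_N^{(3)} = ∫_0^{1−h̃(λ,N)} ((1+a)/(1−a)) (ψ₁ − ψ(a)) da. Then J_N^{(3)} / log N → 0 as N → ∞. -/

import Mathlib

/-!
Since ψ → ψ₁ at 1, the integrand ((1 + a) / (1 - a)) (ψ₁ - ψ a) is o(1 / (1 - a)) as a → 1⁻,
so its integral over [0, 1 - h] is o(log (1 / h)) as h → 0⁺. The cutoff h̃(λ, N) tends to 0⁺ with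
log (1 / h̃(λ, N)) = O(log N), which gives the claim.
-/

open Filter MeasureTheory intervalIntegral

noncomputable def htilde (lam x : ℝ) : ℝ :=
  (1 / 4 + Real.sqrt (1 / 16 + x / (2 * lam)))⁻¹

open Asymptotics Topology

theorem norm_integral_le_mul_log_div {g : ℝ → ℝ} {K a b : ℝ} (ha : 0 < a) (hab : a ≤ b)
    (hg : ∀ t ∈ Set.Ioc a b, ‖g t‖ ≤ K * t⁻¹) :
    ‖∫ t in a..b, g t‖ ≤ K * Real.log (b / a) := by
  have hpos : ∀ t ∈ Set.uIcc a b, 0 < t := fun t ht => by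
    rw [Set.uIcc_of_le hab] at ht
    exact ha.trans_le ht.1
  have hinv : IntervalIntegrable (fun t : ℝ => t⁻¹) volume a b :=
    intervalIntegrable_inv (fun t ht => (hpos t ht).ne') continuousOn_id
  calc ‖∫ t in a..b, g t‖ ≤ ∫ t in a..b, K * t⁻¹ :=
        norm_integral_le_of_norm_le hab (ae_of_all _ hg) (hinv.const_mul K)
    _ = K * Real.log (b / a) := by
        rw [intervalIntegral.integral_const_mul,
          integral_inv fun h => (lt_irrefl 0 (hpos 0 h)).elim]

theorem integral_isLittleO_log_of_isLittleO_inv {g : ℝ → ℝ}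
    (hint : ∀ h ∈ Set.Ioc (0 : ℝ) 1, IntervalIntegrable g volume h 1)
    (hg : g =o[𝓝[>] 0] fun t => t⁻¹) :
    (fun h => ∫ t in h..1, g t) =o[𝓝[>] 0] Real.log := by
  refine isLittleO_iff.2 fun c hc => ?_
  obtain ⟨δ, hδ, hδg⟩ :
      ∃ δ ∈ Set.Ioc (0 : ℝ) 1, ∀ t ∈ Set.Ioc 0 δ, ‖g t‖ ≤ c / 2 * t⁻¹ := by
    obtain ⟨u, hu, hsub⟩ := mem_nhdsGT_iff_exists_Ioc_subset.1 (hg.def (half_pos hc))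
    refine ⟨min u 1, ⟨lt_min hu one_pos, min_le_right u 1⟩, fun t ht => ?_⟩
    simpa [abs_of_pos ht.1] using hsub ⟨ht.1, ht.2.trans (min_le_left u 1)⟩
  have hlog : Tendsto (fun h => c / 2 * -Real.log h) (𝓝[>] 0) atTop :=
    (tendsto_neg_atBot_atTop.comp Real.tendsto_log_nhdsGT_zero).const_mul_atTop (half_pos hc)
  -- On (h, δ] the bound gives (c / 2) log (δ / h); the fixed piece over [δ, 1] is eventually
  -- dominated by (c / 2) |log h| because |log h| → ∞.
  filter_upwards [Ioo_mem_nhdsGT hδ.1, hlog.eventually_ge_atTop ‖∫ t in δ..1, g t‖]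
    with h ⟨h0, hhδ⟩ htail
  have hlogh : ‖Real.log h‖ = -Real.log h := by
    rw [Real.norm_eq_abs, abs_of_neg (Real.log_neg h0 (hhδ.trans_le hδ.2))]
  have hhead : ‖∫ t in h..δ, g t‖ ≤ c / 2 * -Real.log h := by
    refine (norm_integral_le_mul_log_div h0 hhδ.le
      fun t ht => hδg t ⟨h0.trans ht.1, ht.2⟩).trans ?_
    rw [Real.log_div hδ.1.ne' h0.ne']
    nlinarith [Real.log_nonpos hδ.1.le hδ.2]
  have hh1 : h ∈ Set.Ioc (0 : ℝ) 1 := ⟨h0, hhδ.le.trans hδ.2⟩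
  rw [← integral_add_adjacent_intervals ((hint h hh1).trans (hint δ hδ).symm) (hint δ hδ),
    hlogh]
  linarith [norm_add_le (∫ t in h..δ, g t) (∫ t in δ..1, g t)]

theorem integral_isLittleO_log_of_isLittleO_inv_one_sub {f : ℝ → ℝ}
    (hint : ∀ b ∈ Set.Ico (0 : ℝ) 1, IntervalIntegrable f volume 0 b)
    (hf : f =o[𝓝[<] 1] fun a => (1 - a)⁻¹) :
    (fun h => ∫ a in 0..1 - h, f a) =o[𝓝[>] 0] Real.log := by
  have hrefl : Tendsto (fun t : ℝ => 1 - t) (𝓝[>] 0) (𝓝[<] 1) := by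
    refine tendsto_nhdsWithin_iff.2 ⟨?_, eventually_nhdsWithin_of_forall fun t ht => ?_⟩
    · exact ((continuous_const.sub continuous_id).tendsto' 0 1 (sub_zero 1)).mono_left
        nhdsWithin_le_nhds
    · simpa using ht
  have hg := integral_isLittleO_log_of_isLittleO_inv (g := fun t => f (1 - t))
    (fun h hh => by
      simpa using
        ((hint (1 - h) ⟨by linarith [hh.2], by linarith [hh.1]⟩).comp_sub_left 1).symm)
    (by simpa [Function.comp_def] using hf.comp_tendsto hrefl)
  refine hg.congr_left fun h => ?_
  simp [integral_comp_sub_left]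

theorem intervalIntegrable_J3_integrand {ψ : ℝ → ℝ} (ψ₁ : ℝ)
    (hint : IntegrableOn ψ (Set.Ico 0 1)) {b : ℝ} (hb : b ∈ Set.Ico (0 : ℝ) 1) :
    IntervalIntegrable (fun a => (1 + a) / (1 - a) * (ψ₁ - ψ a)) volume 0 b := by
  have hcont : ContinuousOn (fun a : ℝ => (1 + a) / (1 - a)) (Set.Icc 0 b) :=
    ContinuousOn.div (by fun_prop) (by fun_prop) fun a ha => (sub_pos.2 (ha.2.trans_lt hb.2)).ne'
  have hψ : IntegrableOn (fun a => ψ₁ - ψ a) (Set.Icc 0 b) :=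
    (integrableOn_const measure_Icc_lt_top.ne).sub (hint.mono_set (Set.Icc_subset_Ico_right hb.2))
  exact (intervalIntegrable_iff_integrableOn_Icc_of_le hb.1).2
    (hψ.continuousOn_mul hcont isCompact_Icc)

theorem J3_integrand_isLittleO_inv_one_sub {ψ : ℝ → ℝ} {ψ₁ : ℝ}
    (hlim : Tendsto ψ (𝓝[<] 1) (𝓝 ψ₁)) :
    (fun a => (1 + a) / (1 - a) * (ψ₁ - ψ a)) =o[𝓝[<] 1] fun a => (1 - a)⁻¹ := by
  have h0 : Tendsto (fun a => (1 + a) * (ψ₁ - ψ a)) (𝓝[<] 1) (𝓝 0) := by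
    simpa using (((continuous_const.add continuous_id).tendsto (1 : ℝ)).mono_left
      nhdsWithin_le_nhds).mul ((tendsto_const_nhds (x := ψ₁)).sub hlim)
  simpa [div_eq_mul_inv, mul_right_comm] using
    ((isLittleO_one_iff ℝ).2 h0).mul_isBigO (isBigO_refl (fun a : ℝ => (1 - a)⁻¹) _)

section htilde

variable {lam : ℝ}

theorem htilde_pos (lam x : ℝ) : 0 < htilde lam x := by
  unfold htilde
  positivity

theorem tendsto_htilde_atTop_nhdsGT_zero (hlam : 0 < lam) :
    Tendsto (htilde lam) atTop (𝓝[>] 0) :=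
  tendsto_nhdsWithin_iff.2
    ⟨(tendsto_atTop_add_const_left _ _ (Real.tendsto_sqrt_atTop.comp
      (tendsto_atTop_add_const_left _ _
        (tendsto_id.atTop_div_const (by positivity))))).inv_tendsto_atTop,
    Eventually.of_forall (htilde_pos lam)⟩

theorem isBigO_log_htilde (hlam : 0 < lam) :
    (fun x => Real.log (htilde lam x)) =O[atTop] Real.log := by
  refine IsBigO.of_bound 2 ?_
  filter_upwards [eventually_ge_atTop 3, eventually_ge_atTop lam,
    eventually_ge_atTop (2 * lam)⁻¹] with x hx3 hxlam hxinv
  have hinv : (htilde lam x)⁻¹ = 1 / 4 + Real.sqrt (1 / 16 + x / (2 * lam)) := by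
    rw [htilde, inv_inv]
  have hdiv : x / (2 * lam) = x * (2 * lam)⁻¹ := div_eq_mul_inv _ _
  have hlow : 1 ≤ (htilde lam x)⁻¹ := by
    have : 3 / 4 ≤ Real.sqrt (1 / 16 + x / (2 * lam)) := by
      rw [Real.le_sqrt (by norm_num) (by positivity), hdiv]
      nlinarith [mul_inv_cancel₀ (by positivity : 2 * lam ≠ 0)]
    linarith
  have hupp : (htilde lam x)⁻¹ ≤ x ^ 2 := by
    have : Real.sqrt (1 / 16 + x / (2 * lam)) ≤ 2 * x := by
      rw [Real.sqrt_le_iff, hdiv]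
      exact ⟨by linarith,
        by nlinarith [mul_le_mul_of_nonneg_left hxinv (by linarith : (0 : ℝ) ≤ x)]⟩
    nlinarith
  calc ‖Real.log (htilde lam x)‖ = Real.log (htilde lam x)⁻¹ := by
        rw [← norm_neg, ← Real.log_inv, Real.norm_of_nonneg (Real.log_nonneg hlow)]
    _ ≤ Real.log (x ^ 2) := Real.log_le_log (by linarith) hupp
    _ = 2 * ‖Real.log x‖ := by
        rw [Real.log_pow, Real.norm_of_nonneg (Real.log_nonneg (by linarith))]
        norm_num

end htilde

theorem J3_div_log_tendsto_zero_general (ψ : ℝ → ℝ) (ψ₁ : ℝ)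
    (hint : IntegrableOn ψ (Set.Ico (0 : ℝ) 1))
    (hlim : Tendsto ψ (nhdsWithin 1 (Set.Iio 1)) (nhds ψ₁))
    (lam : ℝ) (hlam : 0 < lam) :
    Tendsto (fun N : ℕ =>
      (∫ a in (0 : ℝ)..(1 - htilde lam N), ((1 + a) / (1 - a)) * (ψ₁ - ψ a))
        / Real.log N) atTop (nhds 0) := by
  have hJ := integral_isLittleO_log_of_isLittleO_inv_one_sub
    (fun b hb => intervalIntegrable_J3_integrand ψ₁ hint hb)
    (J3_integrand_isLittleO_inv_one_sub hlim)
  have hN := tendsto_natCast_atTop_atTop (R := ℝ)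
  exact ((hJ.comp_tendsto ((tendsto_htilde_atTop_nhdsGT_zero hlam).comp hN)).trans_isBigO
    ((isBigO_log_htilde hlam).comp_tendsto hN)).tendsto_div_nhds_zero

theorem J3_div_log_tendsto_zero (ψ : ℝ → ℝ) (ψ₁ : ℝ) (hψ₁ : 0 < ψ₁)
    (hnonneg : ∀ x ∈ Set.Ico (0 : ℝ) 1, 0 ≤ ψ x)
    (hint : IntegrableOn ψ (Set.Ico (0 : ℝ) 1))
    (hlim : Tendsto ψ (nhdsWithin 1 (Set.Iio 1)) (nhds ψ₁))
    (lam : ℝ) (hlam : 0 < lam) :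
    Tendsto (fun N : ℕ =>
      (∫ a in (0 : ℝ)..(1 - htilde lam N), ((1 + a) / (1 - a)) * (ψ₁ - ψ a))
        / Real.log N) atTop (nhds 0) :=
  J3_div_log_tendsto_zero_general ψ ψ₁ hint hlim lam hlam
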